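/- There exist 2×2 projective measurements on one EPR pair achieving I₃₃₂₂ value 1/4: specifically there exist 2×2 complex projections A₁,A₂,A₃,B₁,B₂,B₃ such that, with ⟨X⊗Y⟩ = ⟨Ψ₂| X⊗Y |Ψ₂⟩ for |Ψ₂⟩ = (|00⟩+|11⟩)/√2, the expression -⟨A₂⊗I⟩ - ⟨I⊗B₁⟩ - 2⟨I⊗B₂⟩ + ⟨A₁⊗B₁⟩ + ⟨A₁⊗B₂⟩ + ⟨A₂⊗B₁⟩ + ⟨A₂⊗B₂⟩ - ⟨A₁⊗B₃⟩ + ⟨A₂⊗B₃⟩ - ⟨A₃⊗B₁⟩ + ⟨A₃⊗B₂⟩ equals 1/4. -/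

import Mathlib

/-! For the maximally entangled state `⟨X ⊗ Y⟩ = ½ Tr(Xᵀ Y)`. Hence for the projections onto real
unit vectors at angles `α` and `β` the correlator is `½ cos²(α - β)`, while every marginal
`⟨P ⊗ 1⟩`, `⟨1 ⊗ P⟩` is `½`. Giving both parties the projections at angles `0, π/6, π/3`, the
marginals contribute `-2` and the correlators `9/4`. -/

open Matrix Kronecker

noncomputable def ψ₂ : Fin 2 × Fin 2 → ℂ :=
  fun p => if p.1 = p.2 then ((Real.sqrt 2 : ℂ))⁻¹ else 0

noncomputable def E (X Y : Matrix (Fin 2) (Fin 2) ℂ) : ℂ :=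
  star ψ₂ ⬝ᵥ (X ⊗ₖ Y).mulVec ψ₂

theorem E_eq_trace (X Y : Matrix (Fin 2) (Fin 2) ℂ) : E X Y = trace (Xᵀ * Y) / 2 := by
  have hstar : star ((Real.sqrt 2 : ℂ))⁻¹ = ((Real.sqrt 2 : ℂ))⁻¹ := by simp
  have hsq : ((Real.sqrt 2 : ℂ))⁻¹ * ((Real.sqrt 2 : ℂ))⁻¹ = 1 / 2 := by
    rw [← mul_inv, ← Complex.ofReal_mul, Real.mul_self_sqrt zero_le_two]
    norm_num
  simp only [E, ψ₂, dotProduct, mulVec, Fintype.sum_prod_type, Fin.sum_univ_two, trace,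
    mul_apply, kroneckerMap_apply, Pi.star_apply, diag_apply, transpose_apply, Fin.isValue,
    reduceIte, zero_ne_one, one_ne_zero, hstar, star_zero, mul_zero, zero_mul, add_zero, zero_add]
  linear_combination (X 0 0 * Y 0 0 + X 0 1 * Y 0 1 + X 1 0 * Y 1 0 + X 1 1 * Y 1 1) * hsq

section VecMulVec

variable {n α : Type*} [Fintype n] [CommSemiring α] [StarRing α]

theorem isProjection_vecMulVec_star {v : n → α} (hv : star v ⬝ᵥ v = 1) :
    vecMulVec v (star v) * vecMulVec v (star v) = vecMulVec v (star v) ∧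
      (vecMulVec v (star v))ᴴ = vecMulVec v (star v) := by
  refine ⟨?_, by simp⟩
  rw [vecMulVec_mul_vecMulVec, hv, one_smul]

theorem trace_transpose_vecMulVec_star_mul (u v : n → α) :
    trace ((vecMulVec u (star u))ᵀ * vecMulVec v (star v)) =
      (u ⬝ᵥ v) * (star u ⬝ᵥ star v) := by
  rw [transpose_vecMulVec, vecMulVec_mul_vecMulVec, trace_vecMulVec, dotProduct_smul, smul_eq_mul]

end VecMulVec

noncomputable def ray (θ : ℝ) : Fin 2 → ℂ := ![(Real.cos θ : ℂ), (Real.sin θ : ℂ)]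

noncomputable def rayProj (θ : ℝ) : Matrix (Fin 2) (Fin 2) ℂ := vecMulVec (ray θ) (star (ray θ))

theorem star_ray (θ : ℝ) : star (ray θ) = ray θ := by
  ext i; fin_cases i <;> exact Complex.conj_ofReal _

theorem ray_dotProduct_ray (α β : ℝ) : ray α ⬝ᵥ ray β = (Real.cos (α - β) : ℂ) := by
  simp only [ray, dotProduct, Fin.sum_univ_two, Real.cos_sub]
  push_cast
  simp

theorem star_ray_dotProduct_ray (θ : ℝ) : star (ray θ) ⬝ᵥ ray θ = 1 := by
  rw [star_ray, ray_dotProduct_ray, sub_self, Real.cos_zero, Complex.ofReal_one]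

theorem isProjection_rayProj (θ : ℝ) :
    rayProj θ * rayProj θ = rayProj θ ∧ (rayProj θ)ᴴ = rayProj θ :=
  isProjection_vecMulVec_star (star_ray_dotProduct_ray θ)

theorem E_rayProj_rayProj (α β : ℝ) :
    E (rayProj α) (rayProj β) = (Real.cos (α - β) : ℂ) ^ 2 / 2 := by
  rw [E_eq_trace, rayProj, rayProj, trace_transpose_vecMulVec_star_mul, star_ray, star_ray,
    ray_dotProduct_ray, sq]

theorem E_rayProj_one (θ : ℝ) : E (rayProj θ) 1 = 1 / 2 := by
  rw [E_eq_trace, Matrix.mul_one, trace_transpose, rayProj, trace_vecMulVec, dotProduct_comm,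
    star_ray_dotProduct_ray]

theorem E_one_rayProj (θ : ℝ) : E 1 (rayProj θ) = 1 / 2 := by
  rw [E_eq_trace, transpose_one, Matrix.one_mul, rayProj, trace_vecMulVec, dotProduct_comm,
    star_ray_dotProduct_ray]

theorem stmt_18 :
    ∃ A₁ A₂ A₃ B₁ B₂ B₃ : Matrix (Fin 2) (Fin 2) ℂ,
      (A₁ * A₁ = A₁ ∧ A₁ᴴ = A₁) ∧ (A₂ * A₂ = A₂ ∧ A₂ᴴ = A₂) ∧ (A₃ * A₃ = A₃ ∧ A₃ᴴ = A₃) ∧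
      (B₁ * B₁ = B₁ ∧ B₁ᴴ = B₁) ∧ (B₂ * B₂ = B₂ ∧ B₂ᴴ = B₂) ∧ (B₃ * B₃ = B₃ ∧ B₃ᴴ = B₃) ∧
      -E A₂ 1 - E 1 B₁ - 2 * E 1 B₂ + E A₁ B₁ + E A₁ B₂ + E A₂ B₁ + E A₂ B₂
        - E A₁ B₃ + E A₂ B₃ - E A₃ B₁ + E A₃ B₂ = 1 / 4 := by
  refine ⟨rayProj 0, rayProj (Real.pi / 6), rayProj (Real.pi / 3),
    rayProj 0, rayProj (Real.pi / 6), rayProj (Real.pi / 3),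
    isProjection_rayProj _, isProjection_rayProj _, isProjection_rayProj _,
    isProjection_rayProj _, isProjection_rayProj _, isProjection_rayProj _, ?_⟩
  have h₁ : Real.cos (Real.pi / 6 - Real.pi / 3) = √3 / 2 := by
    rw [show Real.pi / 6 - Real.pi / 3 = -(Real.pi / 6) by ring, Real.cos_neg,
      Real.cos_pi_div_six]
  have h₂ : Real.cos (Real.pi / 3 - Real.pi / 6) = √3 / 2 := by
    rw [show Real.pi / 3 - Real.pi / 6 = Real.pi / 6 by ring, Real.cos_pi_div_six]
  have h₃ : ((√3 : ℝ) : ℂ) ^ 2 = 3 := by exact_mod_cast Real.sq_sqrt zero_le_three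
  simp only [E_rayProj_one, E_one_rayProj, E_rayProj_rayProj, h₁, h₂, sub_self, sub_zero,
    zero_sub, Real.cos_neg, Real.cos_zero, Real.cos_pi_div_six, Real.cos_pi_div_three]
  push_cast
  linear_combination (1 / 2 : ℂ) * h₃
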